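/- With δ* = Σ_{i=1}^n (t_i − 1) ∂/∂t_i, we have (δ* + 1)(Σ_{j=1}^{n+1} tr(A_j A_{n+2})/(t_j − 1)) = −tr(A_{n+1} A_{n+2}). -/

import Mathlib

/-! Write `g_j = tr(A_j A_{n+2})` and `T_{ij} = tr([A_i, A_j] A_{n+2})`. By the Schlesinger
equations and cyclicity of the trace, `∂_i g_j = T_{ij} (1/(t_i - t_j) - 1/(t_i - 1))` for `j ≠ i`
and `∂_i g_i = -Σ_{j ≠ i} T_{ij}/(t_i - t_j)`. Weighted by `1/(t_j - 1)` these derivatives cancel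
in the sum over `j` (note `T_{i,n+2} = 0`), so differentiating `f = Σ_{j ≤ n+1} g_j/(t_j - 1)`
only sees the denominator: `∂_i f = -g_i/(t_i - 1)²`. Hence `δ* f = -Σ_{i ≤ n} g_i/(t_i - 1)`,
which cancels every term of `f` except `g_{n+1}/(t_{n+1} - 1) = -g_{n+1}`. -/

open Finset

noncomputable section

/-- Extend `t = (t₁, …, tₙ) : Fin n → ℂ` by the fixed points `t_{n+1} = 0` and
`t_{n+2} = 1` (0-based: indices `n` and `n+1` of `Fin (n+2)`). -/
def ext (n : ℕ) (t : Fin n → ℂ) (j : Fin (n + 2)) : ℂ :=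
  if h : (j : ℕ) < n then t ⟨j, h⟩ else if (j : ℕ) = n then 0 else 1

/-- Inclusion of indices `1, …, n` into `1, …, n+2` (0-based). -/
def inc (n : ℕ) : Fin n → Fin (n + 2) := Fin.castLE (by omega)

/-- The partial derivative `∂f/∂t_i` of a scalar function on `ℂⁿ`. -/
def pderiv (n : ℕ) (i : Fin n) (f : (Fin n → ℂ) → ℂ) (t : Fin n → ℂ) : ℂ :=
  fderiv ℂ f t (Pi.single i 1)

/-- `ρ = −(θ₁ + ⋯ + θ_{n+3})/2`. -/
def rho (n : ℕ) (θ : Fin (n + 3) → ℂ) : ℂ := -(∑ j, θ j) / 2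

/-- The constants `C_{ij} = −θ_iθ_j/2 + (θ_i² + θ_j²)/(2(n+1))
− (Σ_k θ_k²)/(2(n+1)(n+2))`. -/
def Cc (n : ℕ) (θ : Fin (n + 3) → ℂ) (i j : Fin (n + 2)) : ℂ :=
  -(θ (Fin.castSucc i) * θ (Fin.castSucc j)) / 2
    + (θ (Fin.castSucc i) ^ 2 + θ (Fin.castSucc j) ^ 2) / (2 * ((n : ℂ) + 1))
    - (∑ k, θ k ^ 2) / (2 * ((n : ℂ) + 1) * ((n : ℂ) + 2))

/-- `H̃_i = Σ_{1 ≤ j ≤ n+2, j ≠ i} tr(A_i A_j)/(t_i − t_j)`. -/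
def Htil (n : ℕ) (A : Fin (n + 2) → (Fin n → ℂ) → Matrix (Fin 2) (Fin 2) ℂ)
    (i : Fin n) (t : Fin n → ℂ) : ℂ :=
  ∑ j ∈ Finset.univ.filter (fun j => j ≠ inc n i),
    (A (inc n i) t * A j t).trace / (t i - ext n t j)

section PartialDerivative

variable {n : ℕ} {i : Fin n} {t : Fin n → ℂ} {f g : (Fin n → ℂ) → ℂ}

lemma pderiv_fun_sum {ι : Type*} (u : Finset ι) (F : ι → (Fin n → ℂ) → ℂ)
    (hF : ∀ j ∈ u, DifferentiableAt ℂ (F j) t) :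
    pderiv n i (fun s => ∑ j ∈ u, F j s) t = ∑ j ∈ u, pderiv n i (F j) t := by
  simp [pderiv, fderiv_fun_sum hF]

lemma pderiv_fun_mul (hf : DifferentiableAt ℂ f t) (hg : DifferentiableAt ℂ g t) :
    pderiv n i (fun s => f s * g s) t = f t * pderiv n i g t + g t * pderiv n i f t := by
  simp [pderiv, fderiv_fun_mul hf hg]

lemma pderiv_fun_sub_const (c : ℂ) : pderiv n i (fun s => f s - c) t = pderiv n i f t := by
  rw [pderiv, fderiv_sub_const, pderiv]

lemma pderiv_fun_div (hf : DifferentiableAt ℂ f t) (hg : DifferentiableAt ℂ g t) (hg₀ : g t ≠ 0) :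
    pderiv n i (fun s => f s / g s) t
      = (pderiv n i f t * g t - f t * pderiv n i g t) / g t ^ 2 := by
  have hinv : pderiv n i (fun s => (g s)⁻¹) t = -pderiv n i g t / g t ^ 2 := by
    rw [pderiv, show (fun s => (g s)⁻¹) = (·⁻¹) ∘ g from rfl,
      ((hasFDerivAt_inv hg₀).comp t hg.hasFDerivAt).fderiv]
    simp [pderiv, div_eq_mul_inv]
  have hfg : (fun s => f s / g s) = fun s => f s * (g s)⁻¹ := funext fun s => div_eq_mul_inv _ _
  rw [hfg, pderiv_fun_mul hf (hg.fun_inv hg₀), hinv]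
  field_simp
  ring

lemma differentiableAt_trace_mul {m : Type*} [Fintype m] {M N : (Fin n → ℂ) → Matrix m m ℂ}
    (hM : ∀ k l, DifferentiableAt ℂ (fun s => M s k l) t)
    (hN : ∀ k l, DifferentiableAt ℂ (fun s => N s k l) t) :
    DifferentiableAt ℂ (fun s => (M s * N s).trace) t := by
  simp only [Matrix.trace, Matrix.diag, Matrix.mul_apply]
  fun_prop

lemma pderiv_trace_mul {m : Type*} [Fintype m] {M N : (Fin n → ℂ) → Matrix m m ℂ}
    {M' N' : Matrix m m ℂ}
    (hM : ∀ k l, DifferentiableAt ℂ (fun s => M s k l) t)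
    (hN : ∀ k l, DifferentiableAt ℂ (fun s => N s k l) t)
    (hM' : ∀ k l, pderiv n i (fun s => M s k l) t = M' k l)
    (hN' : ∀ k l, pderiv n i (fun s => N s k l) t = N' k l) :
    pderiv n i (fun s => (M s * N s).trace) t = (M' * N t).trace + (M t * N').trace := by
  simp only [Matrix.trace, Matrix.diag, Matrix.mul_apply]
  rw [pderiv_fun_sum _ _ fun k _ => by fun_prop]
  simp only [← Finset.sum_add_distrib]
  refine Finset.sum_congr rfl fun k _ => ?_
  rw [pderiv_fun_sum _ _ fun l _ => (hM k l).fun_mul (hN l k)]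
  refine Finset.sum_congr rfl fun l _ => ?_
  rw [pderiv_fun_mul (hM k l) (hN l k), hM', hN']
  ring

end PartialDerivative

section Trace

variable {m R : Type*} [Fintype m] [CommRing R]

lemma trace_commutator_mul_self (X Y : Matrix m m R) : ((X * Y - Y * X) * Y).trace = 0 := by
  rw [Matrix.sub_mul, Matrix.trace_sub, Matrix.trace_mul_cycle X Y Y, sub_self]

lemma trace_mul_commutator (X Y Z : Matrix m m R) :
    (Y * (X * Z - Z * X)).trace = -((X * Y - Y * X) * Z).trace := by
  simp only [Matrix.mul_sub, Matrix.sub_mul, Matrix.trace_sub, ← Matrix.mul_assoc]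
  rw [Matrix.trace_mul_cycle Y Z X]
  ring

end Trace

section Coordinates

variable {n : ℕ}

lemma ext_inc (t : Fin n → ℂ) (i : Fin n) : ext n t (inc n i) = t i := by
  simp [_root_.ext, inc]

lemma ext_castSucc_last (t : Fin n → ℂ) : ext n t (Fin.last n).castSucc = 0 := by
  simp [_root_.ext]

lemma ext_last (t : Fin n → ℂ) : ext n t (Fin.last (n + 1)) = 1 := by
  simp [_root_.ext]

lemma inc_ne_last (i : Fin n) : inc n i ≠ Fin.last (n + 1) := by
  simp [inc, Fin.ext_iff]
  omega

lemma ext_sub_one_ne_zero {t : Fin n → ℂ} (hinj : Function.Injective (ext n t))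
    {k : Fin (n + 2)} (hk : k ≠ Fin.last (n + 1)) : ext n t k - 1 ≠ 0 := by
  simpa [ext_last] using sub_ne_zero.2 (hinj.ne hk)

lemma sub_one_ne_zero_of_injective_ext {t : Fin n → ℂ} (hinj : Function.Injective (ext n t))
    (i : Fin n) : t i - 1 ≠ 0 := by
  simpa [ext_inc] using ext_sub_one_ne_zero hinj (inc_ne_last i)

lemma inc_eq_castSucc_castSucc (i : Fin n) : inc n i = i.castSucc.castSucc := rfl

lemma differentiable_ext (j : Fin (n + 2)) : Differentiable ℂ (fun s => ext n s j) := by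
  by_cases h : (j : ℕ) < n
  · simp only [_root_.ext, h, dite_true]
    fun_prop
  · simp only [_root_.ext, h, dite_false]
    fun_prop

lemma pderiv_ext (i : Fin n) (j : Fin (n + 2)) (t : Fin n → ℂ) :
    pderiv n i (fun s => ext n s j) t = if j = inc n i then 1 else 0 := by
  by_cases h : (j : ℕ) < n
  · have : (fun s : Fin n → ℂ => ext n s j) = ContinuousLinearMap.proj (R := ℂ) ⟨j, h⟩ := by
      ext s; simp [_root_.ext, h]
    simp [pderiv, this, Pi.single_apply, inc, Fin.ext_iff, eq_comm]
  · have hj : j ≠ inc n i := fun hj => h (hj ▸ i.isLt)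
    have : (fun s : Fin n → ℂ => ext n s j) = fun _ => if (j : ℕ) = n then 0 else 1 := by
      ext s; simp [_root_.ext, h]
    simp [pderiv, this, hj]

end Coordinates

section Schlesinger

variable {n : ℕ} {m : Type*} [Fintype m]

structure IsSchlesingerAt (A : Fin (n + 2) → (Fin n → ℂ) → Matrix m m ℂ) (t : Fin n → ℂ) :
    Prop where
  differentiableAt : ∀ j k l, DifferentiableAt ℂ (fun s => A j s k l) t
  pderiv_of_ne : ∀ (i : Fin n) (j : Fin (n + 2)), j ≠ inc n i → ∀ k l,
    pderiv n i (fun s => A j s k l) t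
      = ((t i - ext n t j)⁻¹ • (A (inc n i) t * A j t - A j t * A (inc n i) t)) k l
  pderiv_self : ∀ (i : Fin n) k l,
    pderiv n i (fun s => A (inc n i) s k l) t
      = ∑ j ∈ univ.filter (fun j => j ≠ inc n i),
          ((t i - ext n t j)⁻¹ • (A j t * A (inc n i) t - A (inc n i) t * A j t)) k l

variable {t : Fin n → ℂ} {A : Fin (n + 2) → (Fin n → ℂ) → Matrix m m ℂ}

namespace IsSchlesingerAt

lemma pderiv_trace_mul_last_of_ne (hA : IsSchlesingerAt A t) {i : Fin n} {j : Fin (n + 2)}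
    (hj : j ≠ inc n i) :
    pderiv n i (fun s => (A j s * A (Fin.last (n + 1)) s).trace) t
      = ((t i - ext n t j)⁻¹ - (t i - 1)⁻¹)
        * ((A (inc n i) t * A j t - A j t * A (inc n i) t) * A (Fin.last (n + 1)) t).trace := by
  rw [pderiv_trace_mul (hA.differentiableAt j) (hA.differentiableAt _) (hA.pderiv_of_ne i j hj)
    (hA.pderiv_of_ne i _ (inc_ne_last i).symm), Matrix.smul_mul, Matrix.mul_smul,
    Matrix.trace_smul, Matrix.trace_smul, trace_mul_commutator, ext_last, smul_eq_mul, smul_eq_mul]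
  ring

lemma pderiv_trace_mul_last_self (hA : IsSchlesingerAt A t) (i : Fin n) :
    pderiv n i (fun s => (A (inc n i) s * A (Fin.last (n + 1)) s).trace) t
      = -∑ j ∈ univ.erase (inc n i), (t i - ext n t j)⁻¹
          * ((A (inc n i) t * A j t - A j t * A (inc n i) t) * A (Fin.last (n + 1)) t).trace := by
  rw [pderiv_trace_mul (hA.differentiableAt _) (hA.differentiableAt _)
    (fun k l => (hA.pderiv_self i k l).trans (Matrix.sum_apply ..).symm)
    (hA.pderiv_of_ne i _ (inc_ne_last i).symm), Matrix.mul_smul, Matrix.trace_smul,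
    trace_mul_commutator, sub_self, Matrix.zero_mul, Matrix.trace_zero, neg_zero, smul_zero,
    add_zero, Matrix.sum_mul, Matrix.trace_sum, ← Finset.sum_neg_distrib, filter_ne']
  refine Finset.sum_congr rfl fun j _ => ?_
  rw [Matrix.smul_mul, Matrix.trace_smul, smul_eq_mul, ← neg_sub (A (inc n i) t * A j t),
    Matrix.neg_mul, Matrix.trace_neg, mul_neg]

lemma sum_pderiv_trace_mul_last_div_eq_zero (hA : IsSchlesingerAt A t)
    (hinj : Function.Injective (ext n t)) (i : Fin n) :
    ∑ j : Fin (n + 1), pderiv n i (fun s => (A j.castSucc s * A (Fin.last (n + 1)) s).trace) t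
      / (ext n t j.castSucc - 1) = 0 := by
  set T : Fin (n + 2) → ℂ := fun k =>
    ((A (inc n i) t * A k t - A k t * A (inc n i) t) * A (Fin.last (n + 1)) t).trace
  set h : Fin (n + 2) → ℂ := fun k =>
    pderiv n i (fun s => (A k s * A (Fin.last (n + 1)) s).trace) t / (ext n t k - 1)
  have hti := sub_one_ne_zero_of_injective_ext hinj i
  have h_last : h (Fin.last (n + 1)) = 0 := by
    simp [h, hA.pderiv_trace_mul_last_of_ne (inc_ne_last i).symm, ext_last]
  have h_of_ne : ∀ k ≠ inc n i, h k = (t i - ext n t k)⁻¹ * T k / (t i - 1) := by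
    intro k hk
    by_cases hkb : k = Fin.last (n + 1)
    · subst hkb
      simp [h_last, T, trace_commutator_mul_self]
    have htk : t i - ext n t k ≠ 0 := by
      simpa [ext_inc] using sub_ne_zero.2 (hinj.ne hk.symm)
    have hk1 := ext_sub_one_ne_zero hinj hkb
    simp only [h, hA.pderiv_trace_mul_last_of_ne hk]
    field_simp
    ring
  have h_self :
      h (inc n i) = -∑ k ∈ univ.erase (inc n i), (t i - ext n t k)⁻¹ * T k / (t i - 1) := by
    simp only [h, T, hA.pderiv_trace_mul_last_self, ext_inc, neg_div, Finset.sum_div]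
  calc ∑ j : Fin (n + 1), h j.castSucc = ∑ k, h k := by
        rw [Fin.sum_univ_castSucc h, h_last, add_zero]
    _ = h (inc n i) + ∑ k ∈ univ.erase (inc n i), h k := (add_sum_erase _ _ (mem_univ _)).symm
    _ = 0 := by
      rw [h_self, sum_congr rfl fun k hk => h_of_ne k (ne_of_mem_erase hk), neg_add_cancel]

lemma pderiv_sum_trace_mul_last_div (hA : IsSchlesingerAt A t)
    (hinj : Function.Injective (ext n t)) (i : Fin n) :
    pderiv n i (fun s => ∑ j : Fin (n + 1),
        (A j.castSucc s * A (Fin.last (n + 1)) s).trace / (ext n s j.castSucc - 1)) t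
      = -(A (inc n i) t * A (Fin.last (n + 1)) t).trace / (t i - 1) ^ 2 := by
  have hx : ∀ j : Fin (n + 1), ext n t j.castSucc - 1 ≠ 0 := fun j =>
    ext_sub_one_ne_zero hinj (Fin.castSucc_ne_last j)
  have hnum : ∀ j, DifferentiableAt ℂ (fun s => (A j s * A (Fin.last (n + 1)) s).trace) t :=
    fun j => differentiableAt_trace_mul (hA.differentiableAt j) (hA.differentiableAt _)
  have hden : ∀ j, DifferentiableAt ℂ (fun s => ext n s j - 1) t :=
    fun j => ((differentiable_ext j).sub_const 1).differentiableAt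
  have hterm : ∀ j : Fin (n + 1),
      pderiv n i (fun s => (A j.castSucc s * A (Fin.last (n + 1)) s).trace
          / (ext n s j.castSucc - 1)) t
        = pderiv n i (fun s => (A j.castSucc s * A (Fin.last (n + 1)) s).trace) t
            / (ext n t j.castSucc - 1)
          - if j = i.castSucc then (A (inc n i) t * A (Fin.last (n + 1)) t).trace / (t i - 1) ^ 2
            else 0 := by
    intro j
    rw [pderiv_fun_div (hnum _) (hden _) (hx j), pderiv_fun_sub_const, pderiv_ext]
    simp only [inc_eq_castSucc_castSucc, Fin.castSucc_inj]
    by_cases hj : j = i.castSucc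
    · subst hj
      have hti := hx i.castSucc
      rw [← inc_eq_castSucc_castSucc, ext_inc] at hti ⊢
      simp only [if_true, mul_one]
      field_simp
    · simp only [hj, if_false, mul_zero, sub_zero]
      field_simp [hx j]
  rw [pderiv_fun_sum _ _ fun j _ => by fun_prop (disch := exact hx j),
    sum_congr rfl fun j _ => hterm j, sum_sub_distrib,
    hA.sum_pderiv_trace_mul_last_div_eq_zero hinj i, sum_ite_eq', if_pos (mem_univ _), zero_sub,
    neg_div]

end IsSchlesingerAt

end Schlesinger

/-- With `δ* = Σᵢ (tᵢ − 1) ∂/∂tᵢ`: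
`(δ* + 1)(Σ_{j=1}^{n+1} tr(A_j A_{n+2})/(t_j − 1)) = −tr(A_{n+1} A_{n+2})`. -/
theorem deltaStar_trace_sum
    (n : ℕ)
    (U : Set (Fin n → ℂ)) (hU : IsOpen U)
    (A : Fin (n + 2) → (Fin n → ℂ) → Matrix (Fin 2) (Fin 2) ℂ)
    (hdist : ∀ t ∈ U, ∀ j k : Fin (n + 2), j ≠ k → ext n t j ≠ ext n t k)
    (hHol : ∀ (j : Fin (n + 2)) (k l : Fin 2),
      DifferentiableOn ℂ (fun s => A j s k l) U)
    (hSch1 : ∀ t ∈ U, ∀ (i : Fin n) (j : Fin (n + 2)), j ≠ inc n i →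
      ∀ (k l : Fin 2),
        pderiv n i (fun s => A j s k l) t
          = ((t i - ext n t j)⁻¹ •
              (A (inc n i) t * A j t - A j t * A (inc n i) t)) k l)
    (hSch2 : ∀ t ∈ U, ∀ (i : Fin n) (k l : Fin 2),
      pderiv n i (fun s => A (inc n i) s k l) t
        = ∑ j ∈ Finset.univ.filter (fun j => j ≠ inc n i),
            ((t i - ext n t j)⁻¹ •
              (A j t * A (inc n i) t - A (inc n i) t * A j t)) k l)
    :
    ∀ t ∈ U,
      (∑ i, (t i - 1) *
          pderiv n i (fun s => ∑ j : Fin (n + 1),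
            (A (Fin.castLE (by omega) j) s * A ⟨n + 1, by omega⟩ s).trace
              / (ext n s (Fin.castLE (by omega) j) - 1)) t)
        + (∑ j : Fin (n + 1),
            (A (Fin.castLE (by omega) j) t * A ⟨n + 1, by omega⟩ t).trace
              / (ext n t (Fin.castLE (by omega) j) - 1))
        = -(A ⟨n, by omega⟩ t * A ⟨n + 1, by omega⟩ t).trace := by
  intro t ht
  have hA : IsSchlesingerAt A t :=
    ⟨fun j k l => (hHol j k l).differentiableAt (hU.mem_nhds ht), hSch1 t ht, hSch2 t ht⟩
  have hinj : Function.Injective (ext n t) := fun j k => not_imp_not.1 (hdist t ht j k)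
  show ∑ i, (t i - 1) * pderiv n i (fun s => ∑ j : Fin (n + 1),
        (A j.castSucc s * A (Fin.last (n + 1)) s).trace / (ext n s j.castSucc - 1)) t
      + ∑ j : Fin (n + 1),
        (A j.castSucc t * A (Fin.last (n + 1)) t).trace / (ext n t j.castSucc - 1)
      = -(A (Fin.last n).castSucc t * A (Fin.last (n + 1)) t).trace
  simp only [hA.pderiv_sum_trace_mul_last_div hinj]
  rw [Fin.sum_univ_castSucc]
  simp only [← inc_eq_castSucc_castSucc, ext_inc, ext_castSucc_last]
  rw [← add_assoc, ← sum_add_distrib, sum_eq_zero fun i _ => ?_]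
  · ring
  · field_simp [sub_one_ne_zero_of_injective_ext hinj i]
    ring
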